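/- Let μ be a probability measure on a response space α, let r : α → ℝ be measurable with 0 ≤ r(a) ≤ 1 for μ-almost every a, let s : α → ℝⁿ be a score function, and let F be a symmetric positive semidefinite real n×n matrix. With baseline b = ∫ r dμ, advantage A(a) = r(a) − b, IWSN I(a) = s(a)ᵀ F s(a), forgetting risk R(g) = gᵀ F g, RFT gradient g_RFT(a) = A(a) • s(a), SFT gradient g_SFT = s(a*) for a fixed a* ∈ α, ε₁ = ∫ A² I dμ − (∫ A² dμ)(∫ I dμ), and δ = ∫ I dμ − I(a*), assume A²·I, A², and I are μ-integrable. Then ∫ R(g_RFT(a)) dμ(a) ≤ (1/4) · R(g_SFT) + (1/4) · |δ| + ε₁. -/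

import Mathlib

open MeasureTheory Matrix ProbabilityTheory

/-!
Since `g_RFT(a) = A(a) • s(a)`, the risk is `A(a)² I(a)`, whose mean is `ε₁ + E[A²] E[I]` by the
definition of `ε₁`. Here `E[A²] = Var[r] ≤ 1/4` (Popoviciu), `E[I] ≥ 0` as `F` is positive
semidefinite, and `E[I] = I(a*) + δ ≤ R(g_SFT) + |δ|`.
-/

theorem Matrix.smul_dotProduct_mulVec_smul {ι R : Type*} [Fintype ι] [CommSemiring R]
    (M : Matrix ι ι R) (c : R) (v : ι → R) :
    (c • v) ⬝ᵥ M *ᵥ (c • v) = c ^ 2 * (v ⬝ᵥ M *ᵥ v) := by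
  rw [mulVec_smul, smul_dotProduct, dotProduct_smul, smul_eq_mul, smul_eq_mul, ← mul_assoc, sq]

theorem integral_sq_sub_integral_le_of_mem_Icc {Ω : Type*} [MeasurableSpace Ω] {μ : Measure Ω}
    [IsProbabilityMeasure μ] {X : Ω → ℝ} {a b : ℝ} (hX : AEMeasurable X μ)
    (h : ∀ᵐ ω ∂μ, X ω ∈ Set.Icc a b) :
    ∫ ω, (X ω - ∫ ω', X ω' ∂μ) ^ 2 ∂μ ≤ ((b - a) / 2) ^ 2 :=
  variance_eq_integral hX ▸ variance_le_sq_of_bounded h hX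

theorem rft_forgetting_risk_bound_general
    {α : Type*} [MeasurableSpace α] (μ : Measure α) [IsProbabilityMeasure μ]
    {n : ℕ} (r : α → ℝ) (hmeas : Measurable r)
    (hbound : ∀ᵐ a ∂μ, 0 ≤ r a ∧ r a ≤ 1)
    (s : α → Fin n → ℝ) (F : Matrix (Fin n) (Fin n) ℝ) (hF : F.PosSemidef)
    (astar : α)
    -- advantage with the mean baseline
    (A : α → ℝ) (hA : ∀ a, A a = r a - ∫ a, r a ∂μ)
    -- importance-weighted score norm
    (I : α → ℝ) (hI : ∀ a, I a = s a ⬝ᵥ F.mulVec (s a))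
    -- error terms
    (ε₁ : ℝ)
    (hε₁ : ε₁ = ∫ a, A a ^ 2 * I a ∂μ - (∫ a, A a ^ 2 ∂μ) * (∫ a, I a ∂μ))
    (δ : ℝ) (hδ : δ = (∫ a, I a ∂μ) - I astar) :
    ∫ a, (A a • s a) ⬝ᵥ F.mulVec (A a • s a) ∂μ
      ≤ (1 / 4) * (s astar ⬝ᵥ F.mulVec (s astar)) + (1 / 4) * |δ| + ε₁ := by
  have hvar : ∫ a, A a ^ 2 ∂μ ≤ 1 / 4 := by
    simp_rw [hA]
    convert integral_sq_sub_integral_le_of_mem_Icc hmeas.aemeasurable hbound using 1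
    norm_num
  have hI_nonneg : 0 ≤ ∫ a, I a ∂μ :=
    integral_nonneg fun a => hI a ▸ hF.dotProduct_mulVec_nonneg (s a)
  calc ∫ a, (A a • s a) ⬝ᵥ F.mulVec (A a • s a) ∂μ
      = ∫ a, A a ^ 2 * I a ∂μ := by simp_rw [smul_dotProduct_mulVec_smul, hI]
    _ = (∫ a, A a ^ 2 ∂μ) * (∫ a, I a ∂μ) + ε₁ := by rw [hε₁]; ring
    _ ≤ 1 / 4 * (∫ a, I a ∂μ) + ε₁ := by gcongr
    _ ≤ 1 / 4 * (I astar + |δ|) + ε₁ := by gcongr; linarith [le_abs_self δ]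
    _ = (1 / 4) * (s astar ⬝ᵥ F.mulVec (s astar)) + (1 / 4) * |δ| + ε₁ := by rw [hI]; ring

/-- Corollary of Theorem 1 and the bound `Var[r] ≤ 1/4` for rewards in `[0,1]`:
the expected forgetting risk of the RFT update is bounded by
`(1/4)·R(g_SFT) + (1/4)·|δ| + ε₁`. -/
theorem rft_forgetting_risk_bound
    {α : Type*} [MeasurableSpace α] (μ : Measure α) [IsProbabilityMeasure μ]
    {n : ℕ} (r : α → ℝ) (hmeas : Measurable r)
    (hbound : ∀ᵐ a ∂μ, 0 ≤ r a ∧ r a ≤ 1)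
    (s : α → Fin n → ℝ) (F : Matrix (Fin n) (Fin n) ℝ) (hF : F.PosSemidef)
    (astar : α)
    -- advantage with the mean baseline
    (A : α → ℝ) (hA : ∀ a, A a = r a - ∫ a, r a ∂μ)
    -- importance-weighted score norm
    (I : α → ℝ) (hI : ∀ a, I a = s a ⬝ᵥ F.mulVec (s a))
    -- integrability assumptions
    (hAI : Integrable (fun a => A a ^ 2 * I a) μ)
    (hA2 : Integrable (fun a => A a ^ 2) μ)
    (hIint : Integrable I μ)
    -- error terms
    (ε₁ : ℝ)
    (hε₁ : ε₁ = ∫ a, A a ^ 2 * I a ∂μ - (∫ a, A a ^ 2 ∂μ) * (∫ a, I a ∂μ))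
    (δ : ℝ) (hδ : δ = (∫ a, I a ∂μ) - I astar) :
    ∫ a, (A a • s a) ⬝ᵥ F.mulVec (A a • s a) ∂μ
      ≤ (1 / 4) * (s astar ⬝ᵥ F.mulVec (s astar)) + (1 / 4) * |δ| + ε₁ :=
  rft_forgetting_risk_bound_general μ r hmeas hbound s F hF astar A hA I hI ε₁ hε₁ δ hδ
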